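/- arXiv:2403.06752 — 4 statements merged into one kernel-verified Lean document; each statement's English description precedes it below -/
import Mathlib

section
/- Let G be a connected finite simple graph with diameter at least 4. Then G has a K_{1,2}-structure-cut, i.e., κ(G; K_{1,2}) is well-defined. -/
/-- A copy of `K_{1,2}` in `G`: three distinct vertices `a, b, c` with `b`
adjacent to both `a` and `c`. -/
def SimpleGraph.IsK12Copy {V : Type*} [DecidableEq V] (G : SimpleGraph V)
    (s : Finset V) : Prop :=
  ∃ a b c : V, a ≠ b ∧ a ≠ c ∧ b ≠ c ∧ s = {a, b, c} ∧ G.Adj b a ∧ G.Adj b c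

/-- A `K_{1,2}`-structure-cut of `G`: a nonempty collection of pairwise
vertex-disjoint copies of `K_{1,2}` whose removal leaves a graph that is
disconnected or has exactly one vertex. -/
def SimpleGraph.IsK12StructureCut {V : Type*} [DecidableEq V] (G : SimpleGraph V)
    (F : Finset (Finset V)) : Prop :=
  F.Nonempty ∧ (∀ s ∈ F, G.IsK12Copy s) ∧
    (F : Set (Finset V)).Pairwise Disjoint ∧
    (¬ (G.induce {v : V | ∀ s ∈ F, v ∉ s}).Preconnected ∨
      {v : V | ∀ s ∈ F, v ∉ s}.ncard = 1)

/-- In a path from a vertex at distance `≤ 1` from `u` to a vertex at distance `≥ 3`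
from `u`, there are three consecutive vertices `a, b, c` with `b` at distance `2`. -/
lemma extract_triple {V : Type*} {G : SimpleGraph V} (hconn : G.Connected) {u x y : V}
    (p : G.Walk x y) (hp : p.IsPath) (hx : G.dist u x ≤ 1) (hy : 3 ≤ G.dist u y) :
    ∃ a b c, G.Adj b a ∧ G.Adj b c ∧ a ≠ c ∧ G.dist u b = 2 ∧
      a ∈ p.support ∧ b ∈ p.support ∧ c ∈ p.support := by
  induction p with
  | nil => omega
  | @cons x w y h q ih =>
    by_cases hw : G.dist u w ≤ 1
    · obtain ⟨a, b, c, h1, h2, h3, h4, ha, hb, hc⟩ := ih (hp.of_cons) hw hy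
      exact ⟨a, b, c, h1, h2, h3, h4, by simp [ha], by simp [hb], by simp [hc]⟩
    · have hxw : G.dist x w ≤ 1 := by
        simpa using G.dist_le (SimpleGraph.Walk.cons h SimpleGraph.Walk.nil)
      have htr : G.dist u w ≤ G.dist u x + G.dist x w := hconn.dist_triangle
      have h2 : G.dist u w = 2 := by omega
      cases q with
      | nil => omega
      | @cons _ z _ h' r =>
        refine ⟨x, w, z, h.symm, h', ?_, h2, by simp, by simp, by simp⟩
        intro hxz
        have := hp.2
        subst hxz
        simp at this

theorem diam_ge_four_implies_K12_structure_cut {V : Type*} [Fintype V] [DecidableEq V]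
    (G : SimpleGraph V) (hconn : G.Connected) (hdiam : 4 ≤ G.diam) :
    ∃ F : Finset (Finset V), G.IsK12StructureCut F := by
  classical
  haveI : Nonempty V := hconn.nonempty
  obtain ⟨u, v, huv⟩ := G.exists_dist_eq_diam
  have hd : 4 ≤ G.dist u v := by omega
  -- `Good s` : `s` is a K12 copy whose vertices lie at distance in `[1,3]` from `u`
  set Good : Finset V → Prop :=
    fun s => G.IsK12Copy s ∧ ∀ w ∈ s, 1 ≤ G.dist u w ∧ G.dist u w ≤ 3 with hGooddef
  have hadj1 : ∀ a b : V, G.Adj a b → G.dist a b ≤ 1 := by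
    intro a b hab
    simpa using G.dist_le (SimpleGraph.Walk.cons hab SimpleGraph.Walk.nil)
  have mkGood : ∀ a b c : V, G.Adj b a → G.Adj b c → a ≠ c → G.dist u b = 2 →
      Good {a, b, c} := by
    intro a b c hba hbc hac hb2
    have hlev : ∀ w : V, G.Adj b w → 1 ≤ G.dist u w ∧ G.dist u w ≤ 3 := by
      intro w hbw
      constructor
      · have h1 : G.dist u b ≤ G.dist u w + G.dist w b := hconn.dist_triangle
        have h2 : G.dist w b ≤ 1 := hadj1 _ _ hbw.symm
        omega
      · have h1 : G.dist u w ≤ G.dist u b + G.dist b w := hconn.dist_triangle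
        have h2 : G.dist b w ≤ 1 := hadj1 _ _ hbw
        omega
    refine ⟨⟨a, b, c, hba.ne', hac, hbc.ne, rfl, hba, hbc⟩, ?_⟩
    intro w hw
    simp only [Finset.mem_insert, Finset.mem_singleton] at hw
    rcases hw with rfl | rfl | rfl
    · exact hlev _ hba
    · constructor <;> omega
    · exact hlev _ hbc
  -- the valid families
  set P : Finset (Finset V) → Prop :=
    fun F => F.Nonempty ∧ (∀ s ∈ F, Good s) ∧ (F : Set (Finset V)).Pairwise Disjoint
      with hPdef
  -- an initial valid family, from a geodesic
  obtain ⟨p0⟩ := hconn u v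
  obtain ⟨a0, b0, c0, h1, h2, h3, h4, -, -, -⟩ :=
    extract_triple (u := u) hconn p0.toPath.1 p0.toPath.2 (by simp [G.dist_self]) (by omega)
  have hP0 : P {({a0, b0, c0} : Finset V)} := by
    refine ⟨Finset.singleton_nonempty _, ?_, by simp⟩
    intro s hs
    rw [Finset.mem_singleton] at hs
    subst hs
    exact mkGood _ _ _ h1 h2 h3 h4
  -- take a maximal valid family
  obtain ⟨F, hFmem, hFmax⟩ := Finset.exists_max_image
    (Finset.univ.filter P) Finset.card
    ⟨_, Finset.mem_filter.mpr ⟨Finset.mem_univ _, hP0⟩⟩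
  rw [Finset.mem_filter] at hFmem
  obtain ⟨-, hFne, hFgood, hFdisj⟩ := hFmem
  refine ⟨F, hFne, fun s hs => (hFgood s hs).1, hFdisj, Or.inl ?_⟩
  intro hpre
  set S : Set V := {w : V | ∀ s ∈ F, w ∉ s} with hSdef
  have hu : u ∈ S := by
    intro s hs hus
    have := ((hFgood s hs).2 u hus).1
    simp [G.dist_self] at this
  have hv : v ∈ S := by
    intro s hs hvs
    have := ((hFgood s hs).2 v hvs).2
    omega
  obtain ⟨q⟩ := hpre ⟨u, hu⟩ ⟨v, hv⟩
  have hsup : ∀ w ∈ (q.map (SimpleGraph.Embedding.induce S).toHom).support, w ∈ S := by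
    intro w hw
    rw [SimpleGraph.Walk.support_map, List.mem_map] at hw
    obtain ⟨⟨w', hw'⟩, -, rfl⟩ := hw
    exact hw'
  set q' := (q.map (SimpleGraph.Embedding.induce S).toHom).toPath with hq'def
  obtain ⟨a, b, c, hba, hbc, hac, hb2, ha, hb, hc⟩ :=
    extract_triple (u := u) hconn q'.1 q'.2
      (by change G.dist u u ≤ 1; simp [G.dist_self]) (by change 3 ≤ G.dist u v; omega)
  have hsub := SimpleGraph.Walk.support_toPath_subset
    (q.map (SimpleGraph.Embedding.induce S).toHom)
  have haS : a ∈ S := hsup _ (hsub ha)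
  have hbS : b ∈ S := hsup _ (hsub hb)
  have hcS : c ∈ S := hsup _ (hsub hc)
  -- the new triple is disjoint from all members of F, contradicting maximality
  have hdisj : ∀ t ∈ F, Disjoint ({a, b, c} : Finset V) t := by
    intro t ht
    rw [Finset.disjoint_left]
    intro w hw
    simp only [Finset.mem_insert, Finset.mem_singleton] at hw
    rcases hw with rfl | rfl | rfl
    · exact haS t ht
    · exact hbS t ht
    · exact hcS t ht
  have hnotmem : ({a, b, c} : Finset V) ∉ F := by
    intro hmem
    have := Finset.disjoint_left.mp (hdisj _ hmem) (Finset.mem_insert_self a _)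
    simp at this
  have hPins : P (insert ({a, b, c} : Finset V) F) := by
    refine ⟨Finset.insert_nonempty _ _, ?_, ?_⟩
    · intro s hs
      rw [Finset.mem_insert] at hs
      rcases hs with rfl | hs
      · exact mkGood _ _ _ hba hbc hac hb2
      · exact hFgood s hs
    · rw [Finset.coe_insert]
      exact hFdisj.insert (fun t ht _ => ⟨hdisj t ht, (hdisj t ht).symm⟩)
  have hle := hFmax _ (Finset.mem_filter.mpr ⟨Finset.mem_univ _, hPins⟩)
  rw [Finset.card_insert_of_notMem hnotmem] at hle
  omega
end

section
/- Let G be a connected finite simple graph with n vertices, n ≥ 3, and n ≡ 0 (mod 3). If there exist three distinct vertices u, v, w of G such that N_G(u) ∩ (N_G(v) ∪ N_G(w) ∪ {v, w}) = ∅, then G has a K_{1,2}-structure-cut. -/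
namespace SimpleGraph

variable {V : Type*}

def uncovered (F : Finset (Finset V)) : Set V := {x | ∀ s ∈ F, x ∉ s}

@[simp]
theorem mem_uncovered {F : Finset (Finset V)} {x : V} : x ∈ uncovered F ↔ ∀ s ∈ F, x ∉ s :=
  Iff.rfl

@[simp]
theorem uncovered_empty : uncovered (∅ : Finset (Finset V)) = Set.univ := by
  ext; simp

variable {G : SimpleGraph V}

variable (G) in
/-- For `a ≠ b`: `a` and `b` are at distance at least three. -/
def FarApart (a b : V) : Prop := ¬G.Adj a b ∧ ∀ ⦃z⦄, G.Adj a z → ¬G.Adj b z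

theorem FarApart.symm {a b : V} (h : G.FarApart a b) : G.FarApart b a :=
  ⟨fun hba => h.1 hba.symm, fun _ hbz haz => h.2 haz hbz⟩

theorem farApart_of_neighborSet_inter_eq_empty {u v w : V}
    (h : G.neighborSet u ∩ (G.neighborSet v ∪ G.neighborSet w ∪ {v, w}) = ∅) :
    G.FarApart u v ∧ G.FarApart u w := by
  have hmem : ∀ z, G.Adj u z → ¬(G.Adj v z ∨ G.Adj w z ∨ z = v ∨ z = w) := fun z huz hz =>
    (Set.eq_empty_iff_forall_notMem.mp h) z ⟨huz, by simp only [Set.mem_union,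
      Set.mem_insert_iff, Set.mem_singleton_iff, mem_neighborSet]; tauto⟩
  exact ⟨⟨fun h => hmem v h (by simp), fun z huz hvz => hmem z huz (by simp [hvz])⟩,
    ⟨fun h => hmem w h (by simp), fun z huz hwz => hmem z huz (by simp [hwz])⟩⟩

theorem not_preconnected_induce_of_closed {R K : Set V}
    (hK : ∀ x ∈ K, ∀ y ∈ R, G.Adj x y → y ∈ K) {a b : V} (haR : a ∈ R) (haK : a ∈ K)
    (hbR : b ∈ R) (hbK : b ∉ K) : ¬(G.induce R).Preconnected := fun hpre => by
  obtain ⟨p⟩ := hpre ⟨a, haR⟩ ⟨b, hbR⟩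
  obtain ⟨d, -, hdK, hdK'⟩ := p.exists_boundary_dart {x : R | (x : V) ∈ K} haK hbK
  exact hdK' (hK _ hdK _ d.snd.2 d.adj)

variable [DecidableEq V]

@[simp]
theorem uncovered_insert (t : Finset V) (F : Finset (Finset V)) :
    uncovered (insert t F) = uncovered F \ t := by
  ext; simp [and_comm]

theorem isK12Copy_of_adj {a b c : V} (hac : a ≠ c) (hba : G.Adj b a) (hbc : G.Adj b c) :
    G.IsK12Copy {a, b, c} :=
  ⟨a, b, c, hba.ne', hac, hbc.ne, rfl, hba, hbc⟩

theorem IsK12Copy.card_eq_three {s : Finset V} (h : G.IsK12Copy s) : s.card = 3 := by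
  obtain ⟨a, b, c, hab, hac, hbc, rfl, -, -⟩ := h
  exact Finset.card_eq_three.mpr ⟨a, b, c, hab, hac, hbc, rfl⟩

theorem IsK12Copy.exists_eq_insert {s : Finset V} (h : G.IsK12Copy s) {w : V} (hw : w ∈ s) :
    ∃ d e, w ≠ d ∧ w ≠ e ∧ d ≠ e ∧ s = {w, d, e} := by
  have : (s.erase w).card = 2 := by rw [Finset.card_erase_of_mem hw, h.card_eq_three]
  obtain ⟨d, e, hde, hs⟩ := Finset.card_eq_two.mp this
  have hd : d ∈ s.erase w := by simp [hs]
  have he : e ∈ s.erase w := by simp [hs]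
  exact ⟨d, e, (Finset.ne_of_mem_erase hd).symm, (Finset.ne_of_mem_erase he).symm, hde,
    by rw [← Finset.insert_erase hw, hs]⟩

variable (G) in
def IsK12Packing (F : Finset (Finset V)) : Prop :=
  (∀ s ∈ F, G.IsK12Copy s) ∧ (F : Set (Finset V)).Pairwise Disjoint

theorem IsK12Packing.insert_copy {F : Finset (Finset V)} (hF : G.IsK12Packing F) {t : Finset V}
    (ht : G.IsK12Copy t) (htF : ↑t ⊆ uncovered F) : G.IsK12Packing (insert t F) := by
  refine ⟨Finset.forall_mem_insert _ _ _ |>.mpr ⟨ht, hF.1⟩, ?_⟩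
  rw [Finset.coe_insert]
  exact hF.2.insert_of_symm fun s hs _ =>
    Finset.disjoint_left.mpr fun x hxt hxs => htF hxt s hs hxs

theorem IsK12Packing.ncard_uncovered_add [Fintype V] {F : Finset (Finset V)}
    (hF : G.IsK12Packing F) : (uncovered F).ncard + 3 * F.card = Fintype.card V := by
  have hcompl : (uncovered F)ᶜ = ↑(F.biUnion id) := by ext; simp
  have hcard : (F.biUnion id).card = 3 * F.card := by
    rw [Finset.card_biUnion (t := id) fun s hs t ht hst => hF.2 hs ht hst]
    simp [Finset.sum_congr rfl fun s hs => (hF.1 s hs).card_eq_three, mul_comm]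
  rw [← hcard, ← Set.ncard_coe_finset, ← hcompl, Set.ncard_add_ncard_compl,
    Nat.card_eq_fintype_card]

variable (G) in
def IsK12FreeOn (S : Set V) : Prop := ∀ t, G.IsK12Copy t → ¬ ↑t ⊆ S

theorem IsK12FreeOn.mono {S T : Set V} (hS : G.IsK12FreeOn S) (hTS : T ⊆ S) : G.IsK12FreeOn T :=
  fun t ht htT => hS t ht (htT.trans hTS)

theorem IsK12FreeOn.eq_of_adj {S : Set V} (hS : G.IsK12FreeOn S) {b p q : V} (hb : b ∈ S)
    (hp : p ∈ S) (hq : q ∈ S) (hbp : G.Adj b p) (hbq : G.Adj b q) : p = q := by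
  by_contra hpq
  refine hS _ (isK12Copy_of_adj hpq hbp hbq) ?_
  simp [Set.insert_subset_iff, hp, hb, hq]

theorem exists_isK12Packing_isK12FreeOn [Fintype V] (A : Set V) :
    ∃ F, G.IsK12Packing F ∧ (∀ s ∈ F, ↑s ⊆ A) ∧ G.IsK12FreeOn (uncovered F ∩ A) := by
  classical
  obtain ⟨F, hFmem, hFmax⟩ := Finset.exists_max_image
    (Finset.univ.filter fun F => G.IsK12Packing F ∧ ∀ s ∈ F, ↑s ⊆ A) Finset.card
    ⟨∅, Finset.mem_filter.mpr ⟨Finset.mem_univ _, ⟨by simp, by simp⟩, by simp⟩⟩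
  obtain ⟨hF, hFA⟩ := (Finset.mem_filter.mp hFmem).2
  refine ⟨F, hF, hFA, fun t ht htFA => ?_⟩
  have htF : t ∉ F := fun h => by
    obtain ⟨x, hx⟩ := Finset.card_pos.mp (by rw [ht.card_eq_three]; norm_num)
    exact (htFA hx).1 t h hx
  have := hFmax (insert t F) <| Finset.mem_filter.mpr ⟨Finset.mem_univ _,
    hF.insert_copy ht fun x hx => (htFA hx).1,
    Finset.forall_mem_insert _ _ _ |>.mpr ⟨fun x hx => (htFA hx).2, hFA⟩⟩
  rw [Finset.card_insert_of_notMem htF] at this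
  omega

theorem IsK12Packing.isK12StructureCut {F : Finset (Finset V)} (hF : G.IsK12Packing F)
    (hne : F.Nonempty) {K : Set V} (hK : ∀ x ∈ K, ∀ y ∈ uncovered F, G.Adj x y → y ∈ K)
    {a b : V} (haR : a ∈ uncovered F) (haK : a ∈ K) (hbR : b ∈ uncovered F) (hbK : b ∉ K) :
    G.IsK12StructureCut F :=
  ⟨hne, hF.1, hF.2, Or.inl (not_preconnected_induce_of_closed hK haR haK hbR hbK)⟩

theorem IsK12Packing.isK12StructureCut_insert {F : Finset (Finset V)} (hF : G.IsK12Packing F)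
    {t : Finset V} (ht : G.IsK12Copy t) (htF : ↑t ⊆ uncovered F) {K : Set V}
    (hK : ∀ x ∈ K, ∀ y ∈ uncovered F, G.Adj x y → y ∈ K ∨ y ∈ t) {a b : V}
    (haR : a ∈ uncovered F) (hat : a ∉ t) (haK : a ∈ K)
    (hbR : b ∈ uncovered F) (hbt : b ∉ t) (hbK : b ∉ K) :
    G.IsK12StructureCut (insert t F) := by
  have hrest : uncovered (insert t F) = uncovered F \ t := uncovered_insert t F
  refine (hF.insert_copy ht htF).isK12StructureCut (Finset.insert_nonempty _ _) (K := K) ?_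
    (hrest ▸ ⟨haR, hat⟩) haK (hrest ▸ ⟨hbR, hbt⟩) hbK
  rw [hrest]
  exact fun x hx y hy hxy => (hK x hx y hy.1 hxy).resolve_right hy.2

theorem IsK12Packing.exists_cut_of_attached_at {F : Finset (Finset V)} (hF : G.IsK12Packing F)
    (hpre : (G.induce (uncovered F)).Preconnected) {α β : V} (hα : α ∈ uncovered F)
    (hβ : β ∈ uncovered F) (hαβ : α ≠ β) (hfar : G.FarApart α β) {K : Set V}
    (hKR : K ⊆ uncovered F) (hαK : α ∉ K) (hβK : β ∉ K) {x₀ : V} (hx₀ : x₀ ∈ K)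
    (hK : ∀ x ∈ K, ∀ y ∈ uncovered F, G.Adj x y → y = α ∨ y ∈ K) :
    ∃ F', G.IsK12StructureCut F' := by
  by_cases hpath : ∃ p ∈ uncovered F, ∃ q ∈ uncovered F,
      G.Adj α p ∧ p ∉ K ∧ G.Adj p q ∧ q ≠ α ∧ q ≠ β
  · obtain ⟨p, hp, q, hq, hαp, hpK, hpq, hqα, hqβ⟩ := hpath
    have hqK : q ∉ K := fun hqK =>
      (hK q hqK p hp hpq.symm).elim (fun h => hαp.ne h.symm) hpK
    have hpβ : p ≠ β := by rintro rfl; exact hfar.1 hαp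
    refine ⟨_, hF.isK12StructureCut_insert (isK12Copy_of_adj hqα.symm hαp.symm hpq)
      (by simp [Set.insert_subset_iff, hα, hp, hq]) (K := K) ?_ (hKR hx₀) ?_ hx₀ hβ ?_ hβK⟩
    · intro x hx y hy hxy
      rcases hK x hx y hy hxy with rfl | h
      · simp
      · exact Or.inl h
    · simp only [Finset.mem_insert, Finset.mem_singleton, not_or]
      exact ⟨fun h => hαK (h ▸ hx₀), fun h => hpK (h ▸ hx₀), fun h => hqK (h ▸ hx₀)⟩
    · simp [hαβ.symm, hpβ.symm, hqβ.symm]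
  · -- otherwise `α`, `K` and the neighbours of `α` form a closed part of the rest
    refine absurd hpre (not_preconnected_induce_of_closed (a := α) (b := β)
      (K := {x | x = α ∨ x ∈ K ∨ x ∈ uncovered F ∧ G.Adj α x}) ?_ hα (Or.inl rfl) hβ ?_)
    · rintro x (rfl | hx | ⟨hxR, hαx⟩) y hy hxy
      · exact Or.inr (Or.inr ⟨hy, hxy⟩)
      · exact (hK x hx y hy hxy).imp id Or.inl
      · by_cases hxK : x ∈ K
        · exact (hK x hxK y hy hxy).imp id Or.inl
        by_cases hyα : y = α
        · exact Or.inl hyα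
        by_cases hyβ : y = β
        · exact absurd (hyβ ▸ hxy.symm) (hfar.2 hαx)
        exact absurd ⟨x, hxR, y, hy, hαx, hxK, hxy, hyα, hyβ⟩ hpath
    · rintro (h | h | h)
      exacts [hαβ h.symm, hβK h, hfar.1 h.2]

theorem IsK12Packing.exists_cut_of_far_component {F : Finset (Finset V)} (hF : G.IsK12Packing F)
    (hpre : (G.induce (uncovered F)).Preconnected) {α β : V} (hα : α ∈ uncovered F)
    (hβ : β ∈ uncovered F) (hαβ : α ≠ β) (hfar : G.FarApart α β)
    (hfree : G.IsK12FreeOn (uncovered F \ {α, β})) {p : V} (hp : p ∈ uncovered F \ {α, β})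
    (hβp : ¬G.Adj β p) (hβN : ∀ z ∈ uncovered F \ {α, β}, G.Adj p z → ¬G.Adj β z) :
    ∃ F', G.IsK12StructureCut F' := by
  have hS : ∀ {y}, y ∈ uncovered F → y ≠ α → y ≠ β → y ∈ uncovered F \ {α, β} :=
    fun hy hyα hyβ => ⟨hy, by simp [hyα, hyβ]⟩
  refine hF.exists_cut_of_attached_at hpre hα hβ hαβ hfar
    (K := insert p {z | z ∈ uncovered F \ {α, β} ∧ G.Adj p z}) ?_ ?_ ?_ (Set.mem_insert p _) ?_
  · rintro x (rfl | hx)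
    exacts [hp.1, hx.1.1]
  · rintro (h | h)
    exacts [hp.2 (h ▸ by simp), h.1.2 (by simp)]
  · rintro (h | h)
    exacts [hp.2 (h ▸ by simp), h.1.2 (by simp)]
  · intro x hx y hy hxy
    rcases eq_or_ne y α with hyα | hyα
    · exact Or.inl hyα
    rcases eq_or_ne y β with rfl | hyβ
    · rcases hx with rfl | ⟨hxS, hpx⟩
      exacts [absurd hxy.symm hβp, absurd hxy.symm (hβN x hxS hpx)]
    refine Or.inr ?_
    rcases hx with rfl | ⟨hxS, hpx⟩
    · exact Or.inr ⟨hS hy hyα hyβ, hxy⟩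
    · exact Or.inl (hfree.eq_of_adj hxS (hS hy hyα hyβ) hp hxy hpx.symm)

theorem IsK12FreeOn.exists_bridge {Q : Set V} (hQ : G.IsK12FreeOn Q) {u v : V}
    (hfar : G.FarApart u v) (hu : ∀ p ∈ Q, ¬G.Adj u p → ∃ z ∈ Q, G.Adj p z ∧ G.Adj u z)
    (hv : ∀ p ∈ Q, ¬G.Adj v p → ∃ z ∈ Q, G.Adj p z ∧ G.Adj v z) {p : V} (hp : p ∈ Q) :
    ∃ x ∈ Q, ∃ y ∈ Q, G.Adj u x ∧ G.Adj x y ∧ G.Adj v y ∧ (p = x ∨ p = y) := by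
  by_cases hup : G.Adj u p
  · obtain ⟨z, hz, hpz, hvz⟩ := hv p hp (hfar.2 hup)
    exact ⟨p, hp, z, hz, hup, hpz, hvz, Or.inl rfl⟩
  · obtain ⟨z, hz, hpz, huz⟩ := hu p hp hup
    refine ⟨z, hz, p, hp, huz, hpz.symm, ?_, Or.inr rfl⟩
    by_contra hvp
    obtain ⟨z', hz', hpz', hvz'⟩ := hv p hp hvp
    exact hfar.2 huz (hQ.eq_of_adj hp hz hz' hpz hpz' ▸ hvz')

/-- The bridges `u - x - y - v` split `Q` into pairs, so `|Q| ≡ 1 [MOD 3]` forces two of them. -/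
theorem IsK12FreeOn.exists_two_bridges {Q : Set V} (hQ : G.IsK12FreeOn Q) {u v : V}
    (hbridge : ∀ p ∈ Q, ∃ x ∈ Q, ∃ y ∈ Q, G.Adj u x ∧ G.Adj x y ∧ G.Adj v y ∧ (p = x ∨ p = y))
    (hcard : Q.ncard % 3 = 1) :
    ∃ x₁ ∈ Q, ∃ y₁ ∈ Q, ∃ x₂ ∈ Q, ∃ y₂ ∈ Q, G.Adj u x₁ ∧ G.Adj x₁ y₁ ∧ G.Adj v y₁ ∧
      G.Adj u x₂ ∧ G.Adj x₂ y₂ ∧ G.Adj v y₂ ∧ x₁ ≠ x₂ ∧ y₁ ≠ y₂ := by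
  obtain ⟨p₁, hp₁⟩ := Set.nonempty_of_ncard_ne_zero (by omega : Q.ncard ≠ 0)
  obtain ⟨x₁, hx₁, y₁, hy₁, hux₁, hxy₁, hvy₁, -⟩ := hbridge p₁ hp₁
  obtain ⟨p₂, hp₂, hp₂₁⟩ : (Q \ {x₁, y₁}).Nonempty := by
    rw [Set.nonempty_iff_ne_empty, Ne, Set.sdiff_eq_empty]
    intro hsub
    rw [hsub.antisymm (Set.insert_subset_iff.mpr ⟨hx₁, by simpa⟩), Set.ncard_pair hxy₁.ne]
      at hcard
    omega
  obtain ⟨x₂, hx₂, y₂, hy₂, hux₂, hxy₂, hvy₂, hp₂'⟩ := hbridge p₂ hp₂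
  have hx : x₁ ≠ x₂ := by
    rintro rfl
    obtain rfl := hQ.eq_of_adj hx₁ hy₁ hy₂ hxy₁ hxy₂
    exact hp₂₁ (by rcases hp₂' with rfl | rfl <;> simp)
  have hy : y₁ ≠ y₂ := by
    rintro rfl
    exact hx (hQ.eq_of_adj hy₁ hx₁ hx₂ hxy₁.symm hxy₂.symm)
  exact ⟨x₁, hx₁, y₁, hy₁, x₂, hx₂, y₂, hy₂, hux₁, hxy₁, hvy₁, hux₂, hxy₂, hvy₂, hx, hy⟩

theorem IsK12Packing.exists_cut_of_isolated_leaf {F : Finset (Finset V)} (hF : G.IsK12Packing F)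
    {u v w m x x' y z : V} (hfree : G.IsK12FreeOn (uncovered F \ {u, v, w}))
    (hfar_v : G.FarApart u v) (hfar_w : G.FarApart u w) (huv : u ≠ v) (huw : u ≠ w)
    (hu : u ∈ uncovered F) (hv : v ∈ uncovered F) (hw : w ∈ uncovered F)
    (hm : m ∈ uncovered F) (hvm : G.Adj v m) (hvmw : G.IsK12Copy {v, m, w})
    (hx : x ∈ uncovered F) (hx' : x' ∈ uncovered F) (hux : G.Adj u x) (hux' : G.Adj u x')
    (hxx' : x ≠ x') (hy : y ∈ uncovered F) (hyw : y ≠ w) (hxy : G.Adj x y) (hvy : G.Adj v y)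
    (hym : y ≠ m) (hz : z ∈ uncovered F \ {x, u, x', v, m, w, y}) :
    ∃ F', G.IsK12StructureCut F' := by
  have hS : ∀ {a}, a ∈ uncovered F → a ≠ u → a ≠ v → a ≠ w → a ∈ uncovered F \ {u, v, w} :=
    fun ha hau hav haw => ⟨ha, by simp [hau, hav, haw]⟩
  have hnbr_u : ∀ {a}, G.Adj u a → a ≠ u ∧ a ≠ v ∧ a ≠ w ∧ a ≠ m ∧ a ≠ y := fun hua =>
    ⟨hua.ne', by rintro rfl; exact hfar_v.1 hua, by rintro rfl; exact hfar_w.1 hua,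
      by rintro rfl; exact hfar_v.2 hua hvm, by rintro rfl; exact hfar_v.2 hua hvy⟩
  have hmu : m ≠ u := by rintro rfl; exact hfar_v.1 hvm.symm
  have hyu : y ≠ u := by rintro rfl; exact hfar_v.1 hvy.symm
  obtain ⟨hxu, hxv, hxw, hxm, hxy'⟩ := hnbr_u hux
  obtain ⟨hx'u, hx'v, hx'w, hx'm, hx'y⟩ := hnbr_u hux'
  have hxS := hS hx hxu hxv hxw
  have hF' := hF.insert_copy (isK12Copy_of_adj hxx' hux hux')
    (by simp [Set.insert_subset_iff, hx, hu, hx'])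
  simp only [Set.mem_sdiff, Set.mem_insert_iff, Set.mem_singleton_iff, not_or] at hz
  obtain ⟨hzR, hzx, hzu, hzx', hzv, hzm, hzw, hzy⟩ := hz
  refine ⟨_, hF'.isK12StructureCut_insert hvmw ?_ (K := {y}) ?_ (a := y) (b := z) ?_ ?_ rfl ?_ ?_
    hzy⟩
  · simp [Set.insert_subset_iff, hv, hm, hw, hxv.symm, hx'v.symm, hxm.symm, hx'm.symm,
      hxw.symm, hx'w.symm, hmu, huv.symm, huw.symm]
  · rintro _ rfl y' hy' hyy'
    by_contra hy'K
    simp only [uncovered_insert, Set.mem_sdiff, Finset.mem_coe, Finset.mem_insert,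
      Finset.mem_singleton, Set.mem_singleton_iff, not_or] at hy' hy'K
    -- `x` is the only neighbour of `y` outside `{u, v, w}`, and it has been deleted
    exact hy'.2.1 <| hfree.eq_of_adj (hS hy hyu hvy.ne' hyw)
      (hS hy'.1 hy'.2.2.1 hy'K.2.1 hy'K.2.2.2) hxS hyy' hxy.symm
  · simp [hy, hxy'.symm, hyu, hx'y.symm]
  · simp [hvy.ne', hym, hyw]
  · simp [hzR, hzx, hzu, hzx']
  · simp [hzv, hzm, hzw]

theorem IsK12FreeOn.mem_of_adj_of_mem_triple {R : Set V} {u v w d e : V}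
    (hfree : G.IsK12FreeOn (R \ {u, v, w})) (hfar_w : G.FarApart u w)
    (hT : {w, d, e} ⊆ R \ {u, v}) (hwd : w ≠ d) (hwe : w ≠ e)
    (hQ : ∀ p ∈ R \ {u, v, w, d, e}, (G.Adj u p ∨ G.Adj v p) ∧ ∃ q ∈ R \ {u, v, w, d, e}, G.Adj p q)
    (hvw : ¬G.Adj v w) (hvw' : ∀ m ∈ R, G.Adj v m → ¬G.Adj w m) :
    ∀ x ∈ ({w, d, e} : Set V), ∀ y ∈ R, G.Adj x y → y ∈ ({w, d, e} : Set V) ∨ y = u ∨ y = v := by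
  simp only [Set.insert_subset_iff, Set.singleton_subset_iff, Set.mem_sdiff, Set.mem_insert_iff,
    Set.mem_singleton_iff, not_or] at hT
  obtain ⟨-, ⟨hd, hdu, hdv⟩, ⟨he, heu, hev⟩⟩ := hT
  intro x hx y hy hxy
  by_contra h
  simp only [Set.mem_insert_iff, Set.mem_singleton_iff, not_or] at h hx
  obtain ⟨⟨hyw, hyd, hye⟩, hyu, hyv⟩ := h
  have hyQ : y ∈ R \ {u, v, w, d, e} := ⟨hy, by simp [hyu, hyv, hyw, hyd, hye]⟩
  rcases hx with rfl | hx
  · rcases (hQ y hyQ).1 with huy | hvy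
    exacts [hfar_w.2 huy hxy, hvw' y hy hvy hxy]
  -- `y` already has its single neighbour outside `{u, v, w}` inside `R \ {u, v, w, d, e}`
  obtain ⟨q, hq, hyq⟩ := (hQ y hyQ).2
  have hS : R \ {u, v, w, d, e} ⊆ R \ {u, v, w} :=
    Set.sdiff_subset_sdiff_right (by simp [Set.insert_subset_iff])
  have hxS : x ∈ R \ {u, v, w} := by
    rcases hx with rfl | rfl
    · exact ⟨hd, by simp [hdu, hdv, hwd.symm]⟩
    · exact ⟨he, by simp [heu, hev, hwe.symm]⟩
  obtain rfl := hfree.eq_of_adj (hS hyQ) hxS (hS hq) hxy.symm hyq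
  exact hq.2 (by rcases hx with rfl | rfl <;> simp)

theorem IsK12Packing.exists_cut_of_isolated_vertex {F : Finset (Finset V)}
    (hF : G.IsK12Packing F) {u v w y t₁ t₂ : V} (hfar_v : G.FarApart u v)
    (hfar_w : G.FarApart u w) (huv : u ≠ v) (huw : u ≠ w) (hwv : w ≠ v) (hvw : ¬G.Adj v w)
    (hu : u ∈ uncovered F) (hv : v ∈ uncovered F) (hw : w ∈ uncovered F)
    (hy : y ∈ uncovered F) (ht₂ : t₂ ∈ uncovered F)
    (hwN : ∀ z ∈ uncovered F, G.Adj w z → z = t₁ ∨ z = t₂ ∨ z = v)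
    (hut₁ : G.Adj u t₁) (hvt₂ : G.Adj v t₂) (hvy : G.Adj v y) (hyt₂ : y ≠ t₂) (hyw : y ≠ w) :
    ∃ F', G.IsK12StructureCut F' := by
  refine ⟨_, hF.isK12StructureCut_insert (isK12Copy_of_adj hyt₂ hvy hvt₂)
    (by simp [Set.insert_subset_iff, hy, hv, ht₂]) (K := {w}) ?_ (a := w) (b := u) hw ?_
    rfl hu ?_ huw⟩
  · intro x hx z hz hxz
    rw [Set.mem_singleton_iff] at hx
    rw [hx] at hxz
    rcases hwN z hz hxz with rfl | rfl | rfl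
    · exact absurd hxz (hfar_w.2 hut₁)
    all_goals simp
  · simp only [Finset.mem_insert, Finset.mem_singleton, not_or]
    exact ⟨Ne.symm hyw, hwv, fun h => hvw (h ▸ hvt₂)⟩
  · simp only [Finset.mem_insert, Finset.mem_singleton, not_or]
    exact ⟨fun h => hfar_v.1 (h ▸ hvy).symm, huv, fun h => hfar_v.1 (h ▸ hvt₂).symm⟩

theorem IsK12Packing.exists_cut_of_attached_triple {F : Finset (Finset V)}
    (hF : G.IsK12Packing F) (hpre : (G.induce (uncovered F)).Preconnected) {u v w d e y : V}
    (hfar_v : G.FarApart u v) (hfar_w : G.FarApart u w) (huv : u ≠ v)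
    (hu : u ∈ uncovered F) (hv : v ∈ uncovered F) (hT : {w, d, e} ⊆ uncovered F \ {u, v})
    (hvw : ¬G.Adj v w)
    (hK : ∀ x ∈ ({w, d, e} : Set V), ∀ y ∈ uncovered F, G.Adj x y →
      y ∈ ({w, d, e} : Set V) ∨ y = u ∨ y = v)
    (hy : y ∈ uncovered F \ {u, v, w, d, e}) (hvy : G.Adj v y) :
    ∃ F', G.IsK12StructureCut F' := by
  have hKR : {w, d, e} ⊆ uncovered F := hT.trans Set.sdiff_subset
  simp only [Set.insert_subset_iff, Set.singleton_subset_iff, Set.mem_sdiff, Set.mem_insert_iff,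
    Set.mem_singleton_iff, not_or] at hT
  obtain ⟨⟨hw, hwu, hwv⟩, ⟨hd, hdu, hdv⟩, ⟨he, heu, hev⟩⟩ := hT
  have huK : u ∉ ({w, d, e} : Set V) := by simp [Ne.symm hwu, Ne.symm hdu, Ne.symm heu]
  have hvK : v ∉ ({w, d, e} : Set V) := by simp [Ne.symm hwv, Ne.symm hdv, Ne.symm hev]
  obtain ⟨-, -, hyw, hyd, hye⟩ : y ≠ u ∧ y ≠ v ∧ y ≠ w ∧ y ≠ d ∧ y ≠ e := by
    simpa [not_or] using hy.2
  have hwN : ∀ z ∈ uncovered F, G.Adj w z → z = d ∨ z = e ∨ z = v := fun z hz hwz => by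
    have hzu : z ≠ u := by rintro rfl; exact hfar_w.1 hwz.symm
    simpa [hwz.ne', hzu, or_assoc] using hK w (by simp) z hz hwz
  by_cases hu' : G.Adj u d ∨ G.Adj u e
  · by_cases hv' : G.Adj v d ∨ G.Adj v e
    · rcases hu' with hud | hue
      · exact hF.exists_cut_of_isolated_vertex hfar_v hfar_w huv (Ne.symm hwu) hwv hvw hu hv hw
          hy.1 he hwN hud (hv'.resolve_left (hfar_v.2 hud)) hvy hye hyw
      · exact hF.exists_cut_of_isolated_vertex hfar_v hfar_w huv (Ne.symm hwu) hwv hvw hu hv hw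
          hy.1 hd (fun z hz hwz => or_left_comm.1 (hwN z hz hwz)) hue
          (hv'.resolve_right (hfar_v.2 hue)) hvy hyd hyw
    · refine hF.exists_cut_of_attached_at hpre hu hv huv hfar_v hKR huK hvK (x₀ := w) (by simp) ?_
      intro x hx z hz hxz
      rcases hK x hx z hz hxz with h | rfl | rfl
      · exact Or.inr h
      · exact Or.inl rfl
      · simp only [Set.mem_insert_iff, Set.mem_singleton_iff] at hx
        rcases hx with rfl | rfl | rfl
        exacts [absurd hxz.symm hvw, absurd (Or.inl hxz.symm) hv', absurd (Or.inr hxz.symm) hv']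
  · refine hF.exists_cut_of_attached_at hpre hv hu huv.symm hfar_v.symm hKR hvK huK (x₀ := w)
      (by simp) ?_
    intro x hx z hz hxz
    rcases hK x hx z hz hxz with h | rfl | rfl
    · exact Or.inr h
    · simp only [Set.mem_insert_iff, Set.mem_singleton_iff] at hx
      rcases hx with rfl | rfl | rfl
      exacts [absurd hxz.symm hfar_w.1, absurd (Or.inl hxz.symm) hu', absurd (Or.inr hxz.symm) hu']
    · exact Or.inl rfl

theorem IsK12Packing.exists_cut_of_bridges {F : Finset (Finset V)}
    (hF : G.IsK12Packing F) (hpre : (G.induce (uncovered F)).Preconnected) {u v w d e : V}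
    (hfree : G.IsK12FreeOn (uncovered F \ {u, v, w}))
    (hfar_v : G.FarApart u v) (hfar_w : G.FarApart u w) (huv : u ≠ v) (huw : u ≠ w)
    (hu : u ∈ uncovered F) (hv : v ∈ uncovered F) (hT : {w, d, e} ⊆ uncovered F \ {u, v})
    (hwd : w ≠ d) (hwe : w ≠ e) (hde : d ≠ e)
    (hQu : ∀ p ∈ uncovered F \ {u, v, w, d, e}, ¬G.Adj u p →
      ∃ z ∈ uncovered F \ {u, v, w, d, e}, G.Adj p z ∧ G.Adj u z)
    (hQv : ∀ p ∈ uncovered F \ {u, v, w, d, e}, ¬G.Adj v p →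
      ∃ z ∈ uncovered F \ {u, v, w, d, e}, G.Adj p z ∧ G.Adj v z)
    (hQcard : (uncovered F \ {u, v, w, d, e}).ncard % 3 = 1) :
    ∃ F', G.IsK12StructureCut F' := by
  set Q := uncovered F \ {u, v, w, d, e} with hQdef
  have hQS : Q ⊆ uncovered F \ {u, v, w} :=
    Set.sdiff_subset_sdiff_right (by simp [Set.insert_subset_iff])
  have hbridge := fun p hp => (hfree.mono hQS).exists_bridge hfar_v hQu hQv (p := p) hp
  have hT' := hT
  simp only [Set.insert_subset_iff, Set.singleton_subset_iff, Set.mem_sdiff,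
    Set.mem_insert_iff, Set.mem_singleton_iff, not_or] at hT'
  obtain ⟨⟨hw, hwu, hwv⟩, ⟨hd, hdu, hdv⟩, ⟨he, heu, hev⟩⟩ := hT'
  obtain ⟨x₁, hx₁, y₁, hy₁, x₂, hx₂, y₂, hy₂, hux₁, hxy₁, hvy₁, hux₂, hxy₂, hvy₂, hx, hy⟩ :=
    (hfree.mono hQS).exists_two_bridges hbridge hQcard
  have hy₁w : y₁ ≠ w := fun h => hy₁.2 (by simp [h])
  have hy₂w : y₂ ≠ w := fun h => hy₂.2 (by simp [h])
  by_cases hA : ∃ m ∈ uncovered F, G.Adj v m ∧ G.IsK12Copy {v, m, w}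
  · obtain ⟨m, hm, hvm, hvmw⟩ := hA
    obtain ⟨z, hz, hzm⟩ : ∃ z, (z = d ∨ z = e) ∧ z ≠ m := by
      by_cases hdm : d = m
      · exact ⟨e, Or.inr rfl, hdm ▸ Ne.symm hde⟩
      · exact ⟨d, Or.inl rfl, hdm⟩
    have hzR : ∀ {a b c}, a ∈ Q → b ∈ Q → c ∈ Q → z ∈ uncovered F \ {a, u, b, v, m, w, c} := by
      intro a b c ha hb hc
      have hzQ : ∀ {q}, q ∈ Q → z ≠ q := fun hq h =>
        hq.2 (by rcases hz with rfl | rfl <;> simp [← h])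
      rcases hz with rfl | rfl
      · simp [hd, hzQ ha, hzQ hb, hzQ hc, hdu, hdv, Ne.symm hwd, hzm]
      · simp [he, hzQ ha, hzQ hb, hzQ hc, heu, hev, Ne.symm hwe, hzm]
    rcases eq_or_ne y₁ m with rfl | hy₁m
    · exact hF.exists_cut_of_isolated_leaf hfree hfar_v hfar_w huv huw hu hv hw hm hvm hvmw
        hx₂.1 hx₁.1 hux₂ hux₁ hx.symm hy₂.1 hy₂w hxy₂ hvy₂ hy.symm (hzR hx₂ hx₁ hy₂)
    · exact hF.exists_cut_of_isolated_leaf hfree hfar_v hfar_w huv huw hu hv hw hm hvm hvmw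
        hx₁.1 hx₂.1 hux₁ hux₂ hx hy₁.1 hy₁w hxy₁ hvy₁ hy₁m (hzR hx₁ hx₂ hy₁)
  · have hvw : ¬G.Adj v w := fun h => hA ⟨y₁, hy₁.1, hvy₁, by
      rw [Finset.insert_comm]; exact isK12Copy_of_adj hy₁w hvy₁ h⟩
    have hvw' : ∀ m ∈ uncovered F, G.Adj v m → ¬G.Adj w m := fun m hm hvm hwm =>
      hA ⟨m, hm, hvm, isK12Copy_of_adj (Ne.symm hwv) hvm.symm hwm.symm⟩
    have hQ : ∀ p ∈ Q, (G.Adj u p ∨ G.Adj v p) ∧ ∃ q ∈ Q, G.Adj p q := fun p hp => by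
      obtain ⟨x, hx, y, hy, hux, hxy, hvy, rfl | rfl⟩ := hbridge p hp
      exacts [⟨Or.inl hux, y, hy, hxy⟩, ⟨Or.inr hvy, x, hx, hxy.symm⟩]
    exact hF.exists_cut_of_attached_triple hpre hfar_v hfar_w huv hu hv hT hvw
      (hfree.mem_of_adj_of_mem_triple hfar_w hT hwd hwe hQ hvw hvw') hy₁ hvy₁

theorem IsK12Packing.exists_cut_of_copy_through [Fintype V] (hmod : Fintype.card V % 3 = 0)
    {F : Finset (Finset V)} (hF : G.IsK12Packing F)
    (hpre : (G.induce (uncovered F)).Preconnected) {u v w d e : V}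
    (hfree : G.IsK12FreeOn (uncovered F \ {u, v, w}))
    (hfar_v : G.FarApart u v) (hfar_w : G.FarApart u w) (huv : u ≠ v) (huw : u ≠ w)
    (hu : u ∈ uncovered F) (hv : v ∈ uncovered F) (hT : G.IsK12Copy {w, d, e})
    (hTR : ↑({w, d, e} : Finset V) ⊆ uncovered F \ {u, v}) (hwd : w ≠ d) (hwe : w ≠ e)
    (hde : d ≠ e) :
    ∃ F', G.IsK12StructureCut F' := by
  have hF' := hF.insert_copy hT (hTR.trans Set.sdiff_subset)
  by_cases hpre' : (G.induce (uncovered (insert {w, d, e} F))).Preconnected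
  swap
  · exact ⟨_, Finset.insert_nonempty _ _, hF'.1, hF'.2, Or.inl hpre'⟩
  have hQ : uncovered (insert {w, d, e} F) \ {u, v} = uncovered F \ {u, v, w, d, e} := by
    ext; simp only [uncovered_insert, Set.mem_sdiff, Finset.coe_insert, Finset.coe_singleton,
      Set.mem_insert_iff, Set.mem_singleton_iff]; tauto
  have hQfree : G.IsK12FreeOn (uncovered F \ {u, v, w, d, e}) :=
    hfree.mono (Set.sdiff_subset_sdiff_right (by simp [Set.insert_subset_iff]))
  have hu' : u ∈ uncovered (insert {w, d, e} F) := by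
    rw [uncovered_insert]; exact ⟨hu, fun h => (hTR h).2 (by simp)⟩
  have hv' : v ∈ uncovered (insert {w, d, e} F) := by
    rw [uncovered_insert]; exact ⟨hv, fun h => (hTR h).2 (by simp)⟩
  by_cases hV : ∃ p ∈ uncovered F \ {u, v, w, d, e},
      ¬G.Adj u p ∧ ∀ z ∈ uncovered F \ {u, v, w, d, e}, G.Adj p z → ¬G.Adj u z
  · obtain ⟨p, hp, hup, hpN⟩ := hV
    rw [← hQ] at hQfree hp hpN
    exact hF'.exists_cut_of_far_component hpre' hv' hu' huv.symm hfar_v.symm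
      (by rwa [Set.pair_comm]) (by rwa [Set.pair_comm]) hup (by rwa [Set.pair_comm])
  by_cases hU : ∃ p ∈ uncovered F \ {u, v, w, d, e},
      ¬G.Adj v p ∧ ∀ z ∈ uncovered F \ {u, v, w, d, e}, G.Adj p z → ¬G.Adj v z
  · obtain ⟨p, hp, hvp, hpN⟩ := hU
    rw [← hQ] at hQfree hp hpN
    exact hF'.exists_cut_of_far_component hpre' hu' hv' huv hfar_v hQfree hp hvp hpN
  push Not at hV hU
  have hQcard : (uncovered F \ {u, v, w, d, e}).ncard % 3 = 1 := by
    have hpair : (uncovered (insert {w, d, e} F) \ {u, v}).ncard + 2 =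
        (uncovered (insert {w, d, e} F)).ncard := by
      rw [← Set.ncard_pair huv]
      exact Set.ncard_sdiff_add_ncard_of_subset (Set.pair_subset hu' hv')
    have := hF'.ncard_uncovered_add
    rw [hQ] at hpair
    omega
  exact hF.exists_cut_of_bridges hpre hfree hfar_v hfar_w huv huw hu hv (by simpa using hTR)
    hwd hwe hde hV hU hQcard

theorem IsK12Packing.exists_cut_of_preconnected [Fintype V] (hmod : Fintype.card V % 3 = 0)
    {F : Finset (Finset V)} (hF : G.IsK12Packing F)
    (hpre : (G.induce (uncovered F)).Preconnected) {u v w : V}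
    (hfree : G.IsK12FreeOn (uncovered F \ {u, v, w}))
    (hfar_v : G.FarApart u v) (hfar_w : G.FarApart u w) (huv : u ≠ v) (huw : u ≠ w) (hvw : v ≠ w)
    (hu : u ∈ uncovered F) (hv : v ∈ uncovered F) (hw : w ∈ uncovered F) :
    ∃ F', G.IsK12StructureCut F' := by
  by_cases hfree' : G.IsK12FreeOn (uncovered F \ {u, v})
  · exact hF.exists_cut_of_far_component hpre hv hu huv.symm hfar_v.symm
      (by rwa [Set.pair_comm]) (p := w) ⟨hw, by simp [huw.symm, hvw.symm]⟩
      (fun h => hfar_w.1 h) (fun z _ hwz huz => hfar_w.2 huz hwz)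
  obtain ⟨T, hT, hTR⟩ : ∃ T, G.IsK12Copy T ∧ ↑T ⊆ uncovered F \ {u, v} := by
    simpa [IsK12FreeOn] using hfree'
  have hwT : w ∈ T := by
    by_contra hwT
    refine hfree T hT fun x hx => ⟨(hTR hx).1, ?_⟩
    have := (hTR hx).2
    simp only [Set.mem_insert_iff, Set.mem_singleton_iff, not_or] at this ⊢
    exact ⟨this.1, this.2, fun h => hwT (h ▸ hx)⟩
  obtain ⟨d, e, hwd, hwe, hde, rfl⟩ := hT.exists_eq_insert hwT
  exact hF.exists_cut_of_copy_through hmod hpre hfree hfar_v hfar_w huv huw hu hv hT hTR hwd hwe hde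

end SimpleGraph

theorem card_mod_three_eq_zero_implies_K12_structure_cut_general {V : Type*} [Fintype V] [DecidableEq V]
    (G : SimpleGraph V) (hconn : G.Connected)
    (hmod : Fintype.card V % 3 = 0) (u v w : V)
    (huv : u ≠ v) (huw : u ≠ w) (hvw : v ≠ w)
    (hnbr : G.neighborSet u ∩ (G.neighborSet v ∪ G.neighborSet w ∪ {v, w}) = ∅) :
    ∃ F : Finset (Finset V), G.IsK12StructureCut F := by
  obtain ⟨hfar_v, hfar_w⟩ := SimpleGraph.farApart_of_neighborSet_inter_eq_empty hnbr
  obtain ⟨F, hF, hFA, hfree⟩ := G.exists_isK12Packing_isK12FreeOn ({u, v, w}ᶜ : Set V)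
  have hR : ∀ x ∈ ({u, v, w} : Set V), x ∈ SimpleGraph.uncovered F :=
    fun x hx s hs hxs => hFA s hs hxs hx
  by_cases hpre : (G.induce (SimpleGraph.uncovered F)).Preconnected
  · exact hF.exists_cut_of_preconnected hmod hpre hfree hfar_v hfar_w huv huw hvw
      (hR u (by simp)) (hR v (by simp)) (hR w (by simp))
  · refine ⟨F, Finset.nonempty_iff_ne_empty.mpr ?_, hF.1, hF.2, Or.inl hpre⟩
    rintro rfl
    rw [SimpleGraph.uncovered_empty] at hpre
    exact hpre ((SimpleGraph.induceUnivIso G).preconnected_iff.mpr hconn.preconnected)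

theorem card_mod_three_eq_zero_implies_K12_structure_cut {V : Type*} [Fintype V] [DecidableEq V]
    (G : SimpleGraph V) (hconn : G.Connected) (hn : 3 ≤ Fintype.card V)
    (hmod : Fintype.card V % 3 = 0) (u v w : V)
    (huv : u ≠ v) (huw : u ≠ w) (hvw : v ≠ w)
    (hnbr : G.neighborSet u ∩ (G.neighborSet v ∪ G.neighborSet w ∪ {v, w}) = ∅) :
    ∃ F : Finset (Finset V), G.IsK12StructureCut F :=
  card_mod_three_eq_zero_implies_K12_structure_cut_general G hconn hmod u v w huv huw hvw hnbr
end

section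
/- Let G be a 2-connected finite simple graph on exactly 5 vertices that has no K_{1,2}-structure-cut. Then G is isomorphic to the cycle C_5 or to the complete graph K_5. -/
/-- A graph is 2-connected if it has more than 2 vertices and remains
connected after deleting any single vertex. -/
def SimpleGraph.TwoConnected {V : Type*} [Fintype V] (G : SimpleGraph V) : Prop :=
  2 < Fintype.card V ∧ ∀ v : V, (G.induce {u : V | u ≠ v}).Connected

/-!
On five vertices a `K_{1,2}`-structure-cut consists of a single copy `a - b - c` of `K_{1,2}`, and
it is a cut exactly when the two remaining vertices `d, e` are non-adjacent. So the hypothesis says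
that every cherry `a - b - c` leaves an edge `d e`.

If some vertex `b` has three neighbours `a, c, x`, five applications of this rule make `b` adjacent
to the fifth vertex too, and a vertex adjacent to all others forces every pair to be adjacent:
`G = K_5`. Otherwise every vertex has exactly two neighbours (at least two by 2-connectivity).
Then a cherry `a - b - c` gives the edge `d e`; the second neighbour of `d` is `a` or `c`, say `a`,
and the cherry `b - a - d` gives the edge `c e`, closing the pentagon `a b c e d`.
-/

theorem List.Nodup.mem_of_length_eq_card {α : Type*} [Fintype α] {l : List α} (h : l.Nodup)
    (hl : l.length = Fintype.card α) (x : α) : x ∈ l := by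
  classical
  rw [← List.mem_toFinset, Finset.eq_univ_of_card _ ((List.toFinset_card_of_nodup h).trans hl)]
  exact Finset.mem_univ x

lemma exists_nodup_of_nodup_of_card_eq_five {V : Type*} [Fintype V] (hV : Fintype.card V = 5)
    {a b c : V} (h : [a, b, c].Nodup) : ∃ d e, [a, b, c, d, e].Nodup := by
  classical
  obtain ⟨d, e, hde, hs⟩ := Finset.card_eq_two.mp <| show ([a, b, c].toFinset)ᶜ.card = 2 by
    rw [Finset.card_compl, List.toFinset_card_of_nodup h, hV]; rfl
  have hd : d ∈ ([a, b, c].toFinset)ᶜ := hs ▸ by simp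
  have he : e ∈ ([a, b, c].toFinset)ᶜ := hs ▸ by simp
  refine ⟨d, e, ?_⟩
  simp only [Finset.mem_compl, List.mem_toFinset, List.mem_cons, List.not_mem_nil] at hd he
  grind [List.nodup_cons]

namespace SimpleGraph

variable {V : Type*} {G : SimpleGraph V}

lemma Reachable.exists_adj_of_ne {u v : V} (h : G.Reachable u v) (huv : u ≠ v) :
    ∃ w, G.Adj u w :=
  h.elim fun p => ⟨p.snd, p.adj_snd (Walk.not_nil_of_ne huv)⟩

lemma TwoConnected.exists_adj_ne [Fintype V] (h : G.TwoConnected) {u v : V} (huv : u ≠ v) :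
    ∃ w, w ≠ u ∧ G.Adj v w := by
  classical
  obtain ⟨x, hx⟩ : ({u, v} : Finset V)ᶜ.Nonempty := by
    rw [← Finset.card_pos, Finset.card_compl]
    have := Finset.card_le_two (a := u) (b := v)
    have := h.1
    omega
  simp only [Finset.mem_compl, Finset.mem_insert, Finset.mem_singleton, not_or] at hx
  obtain ⟨⟨w, hwu⟩, hvw⟩ := ((h.2 u).preconnected ⟨v, huv.symm⟩ ⟨x, hx.1⟩).exists_adj_of_ne
    (by simpa [Subtype.ext_iff] using Ne.symm hx.2)
  exact ⟨w, hwu, hvw⟩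

lemma TwoConnected.exists_two_adj [Fintype V] (h : G.TwoConnected) (v : V) :
    ∃ x y, x ≠ y ∧ G.Adj v x ∧ G.Adj v y := by
  obtain ⟨u, hu⟩ := Fintype.exists_ne_of_one_lt_card (by have := h.1; omega) v
  obtain ⟨x, -, hx⟩ := h.exists_adj_ne hu
  obtain ⟨y, hyx, hy⟩ := h.exists_adj_ne (G.ne_of_adj hx).symm
  exact ⟨x, y, hyx.symm, hx, hy⟩

def AdjOffK12 (G : SimpleGraph V) : Prop :=
  ∀ ⦃a b c d e : V⦄, [a, b, c, d, e].Nodup → G.Adj b a → G.Adj b c → G.Adj d e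

lemma adjOffK12_of_not_exists_isK12StructureCut [Fintype V] [DecidableEq V]
    (hV : Fintype.card V = 5) (hnocut : ¬ ∃ F : Finset (Finset V), G.IsK12StructureCut F) :
    G.AdjOffK12 := by
  intro a b c d e h hba hbc
  by_contra hde
  apply hnocut
  have hne := h
  simp only [List.nodup_cons, List.mem_cons, List.not_mem_nil, not_or] at hne
  refine ⟨{{a, b, c}}, Finset.singleton_nonempty _, ?_, by simp, Or.inl fun hpc => hde ?_⟩
  · simp only [Finset.mem_singleton, forall_eq]
    exact ⟨a, b, c, by tauto, by tauto, by tauto, rfl, hba, hbc⟩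
  · obtain ⟨⟨w, hw⟩, hdw⟩ := (hpc ⟨d, by simp; tauto⟩ ⟨e, by simp; tauto⟩).exists_adj_of_ne
      (by simp; tauto)
    rw [induce_adj] at hdw
    have hwd := G.ne_of_adj hdw
    simp only [Finset.mem_singleton, forall_eq, Finset.mem_insert, Set.mem_ofPred_eq] at hw
    have := h.mem_of_length_eq_card (by simp [hV]) w
    simp only [List.mem_cons, List.not_mem_nil] at this
    obtain rfl : w = e := by tauto
    exact hdw

namespace AdjOffK12

lemma adj_of_three_adj (hP : G.AdjOffK12) {a b c x y : V} (h : [a, b, c, x, y].Nodup)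
    (hba : G.Adj b a) (hbc : G.Adj b c) (hbx : G.Adj b x) : G.Adj b y := by
  have hxy : G.Adj x y := hP h hba hbc
  have hcy : G.Adj c y := hP (by grind [List.nodup_cons]) hba hbx
  have hac : G.Adj a c := hP (by grind [List.nodup_cons]) hbx.symm hxy
  have hax : G.Adj a x := hP (by grind [List.nodup_cons]) hbc.symm hcy
  exact hP (by grind [List.nodup_cons]) hac hax

lemma eq_top_of_adj_ne [Fintype V] (hP : G.AdjOffK12) (hV : Fintype.card V = 5) {b : V}
    (hb : ∀ v, v ≠ b → G.Adj b v) : G = ⊤ := by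
  ext p q
  refine ⟨G.ne_of_adj, fun (hpq : p ≠ q) => ?_⟩
  by_cases hp : p = b
  · exact hp ▸ hb q (hp ▸ Ne.symm hpq)
  by_cases hq : q = b
  · exact (hq ▸ hb p (hq ▸ hpq)).symm
  obtain ⟨r, s, h⟩ := exists_nodup_of_nodup_of_card_eq_five hV (a := b) (b := p) (c := q)
    (by grind [List.nodup_cons])
  exact hP (a := r) (c := s) (by grind [List.nodup_cons]) (hb r (by grind [List.nodup_cons]))
    (hb s (by grind [List.nodup_cons]))

lemma eq_top_of_three_adj [Fintype V] (hP : G.AdjOffK12) (hV : Fintype.card V = 5)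
    {a b c x : V} (hba : G.Adj b a) (hbc : G.Adj b c) (hac : a ≠ c) (hbx : G.Adj b x)
    (hxa : x ≠ a) (hxc : x ≠ c) : G = ⊤ := by
  refine hP.eq_top_of_adj_ne hV (b := b) fun v hvb => ?_
  by_cases hv : v ∈ [a, c, x]
  · simp only [List.mem_cons, List.not_mem_nil, or_false] at hv
    rcases hv with rfl | rfl | rfl <;> assumption
  · have := G.ne_of_adj hba
    have := G.ne_of_adj hbc
    have := G.ne_of_adj hbx
    simp only [List.mem_cons, List.not_mem_nil, or_false, not_or] at hv
    exact hP.adj_of_three_adj (by grind [List.nodup_cons]) hba hbc hbx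

lemma exists_pentagon [Fintype V] (hP : G.AdjOffK12) (hV : Fintype.card V = 5)
    (hmin : ∀ v, ∃ x y, x ≠ y ∧ G.Adj v x ∧ G.Adj v y)
    (hmax : ∀ ⦃b a c x⦄, G.Adj b a → G.Adj b c → a ≠ c → G.Adj b x → x = a ∨ x = c) :
    ∃ a b c d e, [a, b, c, d, e].Nodup ∧
      G.Adj a b ∧ G.Adj b c ∧ G.Adj c d ∧ G.Adj d e ∧ G.Adj e a := by
  obtain ⟨b⟩ : Nonempty V := Fintype.card_pos_iff.mp (by omega)
  obtain ⟨a, c, hac, hba, hbc⟩ := hmin b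
  obtain ⟨d, e, h⟩ := exists_nodup_of_nodup_of_card_eq_five hV (a := a) (b := b) (c := c)
    (by simp [hac, (G.ne_of_adj hba).symm, G.ne_of_adj hbc])
  have hde : G.Adj d e := hP h hba hbc
  obtain ⟨z, hze, hdz⟩ : ∃ z, z ≠ e ∧ G.Adj d z := by
    obtain ⟨x, y, hxy, hx, hy⟩ := hmin d
    by_cases hxe : x = e
    exacts [⟨y, hxe ▸ hxy.symm, hy⟩, ⟨x, hxe, hx⟩]
  have hzb : z ≠ b := by
    rintro rfl
    have := hmax hba hbc hac hdz.symm
    grind [List.nodup_cons]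
  have hz := h.mem_of_length_eq_card (by simp [hV]) z
  simp only [List.mem_cons, List.not_mem_nil, or_false] at hz
  rcases hz with rfl | rfl | rfl | rfl | rfl
  · exact ⟨z, b, c, e, d, by grind [List.nodup_cons], hba.symm, hbc,
      hP (by grind [List.nodup_cons]) hba.symm hdz.symm, hde.symm, hdz⟩
  · exact absurd rfl hzb
  · exact ⟨z, b, a, e, d, by grind [List.nodup_cons], hbc.symm, hba,
      hP (by grind [List.nodup_cons]) hbc.symm hdz.symm, hde.symm, hdz⟩
  · exact absurd hdz (G.loopless.irrefl z)
  · exact absurd rfl hze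

end AdjOffK12

lemma nonempty_iso_cycleGraph_five [Fintype V] (hV : Fintype.card V = 5)
    (hmax : ∀ ⦃b a c x⦄, G.Adj b a → G.Adj b c → a ≠ c → G.Adj b x → x = a ∨ x = c)
    {a b c d e : V} (h : [a, b, c, d, e].Nodup) (hab : G.Adj a b) (hbc : G.Adj b c)
    (hcd : G.Adj c d) (hde : G.Adj d e) (hea : G.Adj e a) :
    Nonempty (G ≃g cycleGraph 5) := by
  let f : Fin 5 → V := ![a, b, c, d, e]
  have hf : Function.Injective f := List.nodup_ofFn.mp (by simpa [f] using h)
  have hsucc : ∀ i, G.Adj (f i) (f (i + 1)) := by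
    intro i
    fin_cases i
    exacts [hab, hbc, hcd, hde, hea]
  have hpred : ∀ i, G.Adj (f i) (f (i + 4)) := by
    intro i
    simpa [add_assoc] using (hsucc (i + 4)).symm
  have hadj : ∀ i j, G.Adj (f i) (f j) ↔ (cycleGraph 5).Adj i j := by
    have hne : ∀ i : Fin 5, i + 1 ≠ i + 4 := by decide
    intro i j
    have hcyc : (cycleGraph 5).Adj i j ↔ j = i + 1 ∨ j = i + 4 := by revert i j; decide
    rw [hcyc]
    constructor
    · intro hij
      exact (hmax (hsucc i) (hpred i) (hf.ne (hne i)) hij).imp (@hf _ _) (@hf _ _)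
    · rintro (rfl | rfl)
      exacts [hsucc i, hpred i]
  have hbij : Function.Bijective f :=
    (Fintype.bijective_iff_injective_and_card f).mpr ⟨hf, by simp [hV]⟩
  exact ⟨RelIso.symm ⟨Equiv.ofBijective f hbij, hadj _ _⟩⟩

end SimpleGraph

theorem two_connected_five_vertices_no_cut_iso {V : Type*} [Fintype V] [DecidableEq V]
    (G : SimpleGraph V) (hcard : Fintype.card V = 5) (h2c : G.TwoConnected)
    (hnocut : ¬ ∃ F : Finset (Finset V), G.IsK12StructureCut F) :
    Nonempty (G ≃g SimpleGraph.cycleGraph 5) ∨ Nonempty (G ≃g SimpleGraph.completeGraph (Fin 5)) := by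
  have hP := SimpleGraph.adjOffK12_of_not_exists_isK12StructureCut hcard hnocut
  by_cases hmax : ∀ ⦃b a c x⦄, G.Adj b a → G.Adj b c → a ≠ c → G.Adj b x → x = a ∨ x = c
  · obtain ⟨a, b, c, d, e, h, hab, hbc, hcd, hde, hea⟩ :=
      hP.exists_pentagon hcard h2c.exists_two_adj hmax
    exact Or.inl (SimpleGraph.nonempty_iso_cycleGraph_five hcard hmax h hab hbc hcd hde hea)
  · push Not at hmax
    obtain ⟨b, a, c, x, hba, hbc, hac, hbx, hxa, hxc⟩ := hmax
    obtain rfl := hP.eq_top_of_three_adj hcard hba hbc hac hbx hxa hxc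
    exact Or.inr ⟨SimpleGraph.Iso.completeGraph (Fintype.equivFinOfCardEq hcard)⟩
end

section
/- Let G be a connected finite simple graph with n vertices, n ≥ 3 and n ≡ 2 (mod 3), and suppose G has a cut vertex (i.e., κ(G) = 1). Then κ(G; K_{1,2}) = 1, that is, G has a K_{1,2}-structure-cut consisting of a single copy of K_{1,2}. -/
/-- The connectivity of `G`: the minimum size of a vertex set whose deletion
leaves a graph that is disconnected or has at most one vertex. -/
noncomputable def SimpleGraph.kappa {V : Type*} [Fintype V] [DecidableEq V]
    (G : SimpleGraph V) : ℕ :=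
  sInf {k : ℕ | ∃ S : Finset V,
    (¬ (G.induce (↑S : Set V)ᶜ).Preconnected ∨ ((↑S : Set V)ᶜ).ncard ≤ 1) ∧
    S.card = k}

/-- The `K_{1,2}`-structure-connectivity of `G`: the minimum cardinality of a
`K_{1,2}`-structure-cut of `G`. -/
noncomputable def SimpleGraph.kappaK12 {V : Type*} [Fintype V] [DecidableEq V]
    (G : SimpleGraph V) : ℕ :=
  sInf {k : ℕ | ∃ F : Finset (Finset V), G.IsK12StructureCut F ∧ F.card = k}

/-!
If every neighbour of the cut vertex `v` is a leaf, then `G` is a star centred at `v`, and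
deleting a path `a - v - c` through two leaves leaves at least two isolated leaves. Otherwise
some neighbour `a` of `v` has a neighbour `b ≠ v`; let `W` be the component of `G - v` containing
`a`. If `W` has a vertex besides `a` and `b`, deleting `v - a - b` separates it from the other
components of `G - v`. If `W = {a, b}`, deleting `a - v - c` for a neighbour `c` of `v` outside
`W` separates `b` from any fifth vertex.
-/

open Finset

namespace SimpleGraph

variable {V : Type*} {G : SimpleGraph V}

/-- Every edge leaving `W` ends in `S`, so `W \ S` is a union of components of `G - S`. -/
def Separates (G : SimpleGraph V) (S W : Set V) : Prop :=
  ∀ ⦃p q⦄, p ∈ W → q ∉ S → G.Adj p q → q ∈ W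

namespace Separates

variable {S T W : Set V}

theorem mono (hW : G.Separates S W) (hST : S ⊆ T) : G.Separates T W :=
  fun _ _ hp hq hpq => hW hp (fun h => hq (hST h)) hpq

theorem compl_diff (hW : G.Separates S W) : G.Separates S (Wᶜ \ S) := by
  rintro p q ⟨hpW, hpS⟩ hqS hpq
  exact ⟨fun hqW => hpW (hW hqW hpS hpq.symm), hqS⟩

theorem not_preconnected_induce (hW : G.Separates S W) {p q : V} (hpS : p ∉ S) (hpW : p ∈ W)
    (hqS : q ∉ S) (hqW : q ∉ W) : ¬ (G.induce Sᶜ).Preconnected := by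
  intro hconn
  obtain ⟨w⟩ := hconn ⟨p, hpS⟩ ⟨q, hqS⟩
  obtain ⟨d, -, hd, hd'⟩ := w.exists_boundary_dart {u | (u : V) ∈ W} hpW hqW
  exact hd' (hW hd d.snd.2 d.adj)

theorem exists_adj (hG : G.Preconnected) (hW : G.Separates S W) {p q : V} (hp : p ∈ W)
    (hq : q ∉ W) : ∃ a ∈ W, ∃ s ∈ S, G.Adj a s := by
  obtain ⟨w⟩ := hG p q
  obtain ⟨d, -, hd, hd'⟩ := w.exists_boundary_dart W hp hq
  exact ⟨d.fst, hd, d.snd, by_contra fun h => hd' (hW hd h d.adj), d.adj⟩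

end Separates

theorem exists_separates_of_not_preconnected {S : Set V} (h : ¬ (G.induce Sᶜ).Preconnected)
    {a : V} (ha : a ∉ S) : ∃ W, G.Separates S W ∧ a ∈ W ∧ ∃ y ∉ S, y ∉ W := by
  refine ⟨{u | ∃ hu : u ∉ S, (G.induce Sᶜ).Reachable ⟨a, ha⟩ ⟨u, hu⟩}, ?_, ⟨ha, .rfl⟩, ?_⟩
  · rintro p q ⟨hp, hap⟩ hq hpq
    exact ⟨hq, hap.trans (induce_adj.2 hpq : (G.induce Sᶜ).Adj ⟨p, hp⟩ ⟨q, hq⟩).reachable⟩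
  · by_contra! hall
    exact h fun x y => (hall x x.2).2.symm.trans (hall y y.2).2

theorem Preconnected.adj_of_neighbors_pendant (hG : G.Preconnected) {v : V}
    (hpend : ∀ a, G.Adj v a → ∀ b, G.Adj a b → b = v) : ∀ u ≠ v, G.Adj v u := by
  by_contra! ⟨u, huv, hu⟩
  have hT : G.Separates {v} {w | w ≠ v ∧ ¬ G.Adj v w} := by
    rintro p q ⟨hpv, -⟩ hqv hpq
    exact ⟨hqv, fun hvq => hpv (hpend q hvq p hpq.symm)⟩
  obtain ⟨a, ⟨-, hva⟩, _, rfl, hav⟩ := hT.exists_adj hG ⟨huv, hu⟩ (q := v) fun h => h.1 rfl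
  exact hva hav.symm

theorem IsK12Copy.isK12StructureCut_singleton [DecidableEq V] {s : Finset V}
    (hs : G.IsK12Copy s) (h : ¬ (G.induce (s : Set V)ᶜ).Preconnected) :
    G.IsK12StructureCut {s} := by
  have hrest : {v | ∀ t ∈ ({s} : Finset (Finset V)), v ∉ t} = (s : Set V)ᶜ := by
    ext
    simp
  exact ⟨singleton_nonempty s, by simpa using hs, by simp, Or.inl (hrest ▸ h)⟩

theorem IsK12StructureCut.kappaK12_eq_one [Fintype V] [DecidableEq V]
    {s : Finset V} (h : G.IsK12StructureCut {s}) : G.kappaK12 = 1 :=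
  le_antisymm (Nat.sInf_le ⟨{s}, h, card_singleton s⟩)
    (le_csInf ⟨1, {s}, h, card_singleton s⟩ fun _ ⟨_, hF, hk⟩ => hk ▸ hF.1.card_pos)

theorem _root_.Finset.exists_notMem_of_card_lt_card_univ [Fintype V] {s : Finset V}
    (h : #s < Fintype.card V) : ∃ x, x ∉ s := by
  by_contra! hall
  exact h.not_ge (by rw [eq_univ_of_forall hall, card_univ])

section Finite

variable [Fintype V] [DecidableEq V]

theorem exists_isK12Copy_cut_of_adj_adj (hG : G.Preconnected) (h5 : 5 ≤ Fintype.card V)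
    {v a b y : V} {W : Set V} (hW : G.Separates {v} W) (haW : a ∈ W) (hyv : y ≠ v)
    (hyW : y ∉ W) (hva : G.Adj v a) (hab : G.Adj a b) (hbv : b ≠ v) :
    ∃ s, G.IsK12Copy s ∧ ¬ (G.induce (s : Set V)ᶜ).Preconnected := by
  have hbW : b ∈ W := hW haW hbv hab
  by_cases he : ∃ e ∈ W, e ≠ v ∧ e ≠ a ∧ e ≠ b
  · obtain ⟨e, heW, hev, hea, heb⟩ := he
    refine ⟨{v, a, b}, ⟨v, a, b, hva.ne, hbv.symm, hab.ne, rfl, hva.symm, hab⟩, ?_⟩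
    exact (hW.mono (by simp)).not_preconnected_induce (p := e) (q := y) (by simp [*]) heW
      (by simp [hyv, ne_of_mem_of_not_mem haW hyW |>.symm, ne_of_mem_of_not_mem hbW hyW |>.symm])
      hyW
  · push Not at he
    obtain ⟨c, ⟨hcW, hcv⟩, _, hv, hcv'⟩ :=
      hW.compl_diff.exists_adj hG (p := y) (q := v) ⟨hyW, hyv⟩ fun h => h.2 rfl
    rw [Set.mem_singleton_iff.mp hv] at hcv'
    obtain ⟨q, hq⟩ := exists_notMem_of_card_lt_card_univ (s := {v, a, b, c})
      (card_le_four.trans_lt (by omega))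
    simp only [mem_insert, mem_singleton, not_or] at hq
    refine ⟨{a, v, c}, ⟨a, v, c, hva.ne', ne_of_mem_of_not_mem haW hcW, Ne.symm hcv, rfl, hva,
      hcv'.symm⟩, ?_⟩
    exact (hW.mono (by simp)).not_preconnected_induce (p := b) (q := q)
      (by simp [hab.ne', hbv, ne_of_mem_of_not_mem hbW hcW]) hbW (by simp [hq])
      fun hqW => hq.2.2.1 (he q hqW hq.1 hq.2.1)

theorem exists_isK12Copy_cut_of_neighbors_pendant (hG : G.Preconnected)
    (h5 : 5 ≤ Fintype.card V) {v : V} (hpend : ∀ a, G.Adj v a → ∀ b, G.Adj a b → b = v) :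
    ∃ s, G.IsK12Copy s ∧ ¬ (G.induce (s : Set V)ᶜ).Preconnected := by
  have hstar := hG.adj_of_neighbors_pendant hpend
  obtain ⟨a, ha⟩ := exists_notMem_of_card_lt_card_univ (s := {v}) (by simp; omega)
  obtain ⟨c, hc⟩ := exists_notMem_of_card_lt_card_univ (s := {v, a})
    (card_le_two.trans_lt (by omega))
  obtain ⟨p, hp⟩ := exists_notMem_of_card_lt_card_univ (s := {v, a, c})
    (card_le_three.trans_lt (by omega))
  obtain ⟨q, hq⟩ := exists_notMem_of_card_lt_card_univ (s := {v, a, c, p})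
    (card_le_four.trans_lt (by omega))
  simp only [mem_insert, mem_singleton, not_or] at ha hc hp hq
  have hW : G.Separates {v} {p} := by
    intro p' r hp' hr hpr
    rw [Set.mem_singleton_iff.mp hp'] at hpr
    exact absurd (hpend p (hstar p hp.1) r hpr) hr
  refine ⟨{a, v, c}, ⟨a, v, c, ha, Ne.symm hc.2, Ne.symm hc.1, rfl, hstar a ha,
    hstar c hc.1⟩, ?_⟩
  exact (hW.mono (by simp)).not_preconnected_induce (p := p) (q := q) (by simp [*]) rfl
    (by simp [*]) hq.2.2.2

theorem exists_isK12Copy_cut_of_not_preconnected (hG : G.Preconnected)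
    (h5 : 5 ≤ Fintype.card V) {v : V} (hv : ¬ (G.induce {u : V | u ≠ v}).Preconnected) :
    ∃ s, G.IsK12Copy s ∧ ¬ (G.induce (s : Set V)ᶜ).Preconnected := by
  by_cases hpend : ∀ a, G.Adj v a → ∀ b, G.Adj a b → b = v
  · exact exists_isK12Copy_cut_of_neighbors_pendant hG h5 hpend
  push Not at hpend
  obtain ⟨a, hva, b, hab, hbv⟩ := hpend
  obtain ⟨W, hW, haW, y, hyv, hyW⟩ := exists_separates_of_not_preconnected (S := {v}) hv hva.ne'
  exact exists_isK12Copy_cut_of_adj_adj hG h5 hW haW hyv hyW hva hab hbv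

end Finite

end SimpleGraph

theorem cut_vertex_kappaK12_eq_one {V : Type*} [Fintype V] [DecidableEq V]
    (G : SimpleGraph V) (hconn : G.Connected) (hn : 3 ≤ Fintype.card V)
    (hmod : Fintype.card V % 3 = 2) (v : V)
    (hv : ¬ (G.induce {u : V | u ≠ v}).Preconnected) :
    G.kappaK12 = 1 ∧ ∃ F : Finset (Finset V), G.IsK12StructureCut F ∧ F.card = 1 := by
  obtain ⟨s, hs, hcut⟩ :=
    SimpleGraph.exists_isK12Copy_cut_of_not_preconnected hconn.preconnected (by omega) hv
  have hF := hs.isK12StructureCut_singleton hcut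
  exact ⟨hF.kappaK12_eq_one, {s}, hF, card_singleton s⟩
end
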